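/- Let x' be the first r_x runs of x and y' the first r_y runs of y up through the o_y-th letter of the r_y-th run, with r_x, r_y, o_y ≥ 1. Let l_x be the length of the r_x-th run of x, and d the distance between the letter of the r_x-th run of x and the letter of the r_y-th run of y. Define SP(x, y, r_x, r_y, o_y) as the minimum cost correspondence between x' and y' in which the r_y-th run of y' is not extended. If l_x ≤ o_y, then SP(x, y, r_x, r_y, o_y) = min(SP(x, y, r_x, r_y, o_y − 1) + d, SP(x, y, r_x − 1, r_y, o_y − l_x) + d·l_x). -/

import Mathlib

open scoped BigOperators

variable {α : Type*}

/-- `xb` is the expansion of `x` obtained by replacing the `i`-th letter of `x`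
with `ks[i] ≥ 1` consecutive copies of itself (equivalently, by extending runs). -/
def IsExpansionWith (x : List α) (ks : List ℕ) (xb : List α) : Prop :=
  ks.length = x.length ∧ (∀ k ∈ ks, 1 ≤ k) ∧
    xb = (x.zip ks).flatMap fun p => List.replicate p.2 p.1

/-- `xb` is an expansion of `x` (obtained by extending runs). -/
def IsExpansion (x xb : List α) : Prop := ∃ ks, IsExpansionWith x ks xb

/-- The cost of a correspondence: sum of pointwise distances. -/
def corrCost (d : α → α → ℝ) (xb yb : List α) : ℝ :=
  ((xb.zip yb).map fun p => d p.1 p.2).sum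

/-- A correspondence between `x` and `y`: a pair of equal-length expansions. -/
def IsCorrespondence (x y xb yb : List α) : Prop :=
  IsExpansion x xb ∧ IsExpansion y yb ∧ xb.length = yb.length

/-- Dynamic time warping distance: minimum cost of a correspondence. -/
noncomputable def dtw (d : α → α → ℝ) (x y : List α) : ℝ :=
  sInf {c | ∃ xb yb, IsCorrespondence x y xb yb ∧ c = corrCost d xb yb}

/-- The maximal runs of equal letters of a list. -/
def runsOf [DecidableEq α] (x : List α) : List (List α) := x.splitBy (· == ·)

/-- Number of runs. -/
def numRuns [DecidableEq α] (x : List α) : ℕ := (runsOf x).length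

/-- Length of the final run. -/
def lastRunLen [DecidableEq α] (x : List α) : ℕ := ((runsOf x).getLastD []).length

/-- Length of the `i`-th run (0-indexed). -/
def runLen [DecidableEq α] (x : List α) (i : ℕ) : ℕ := ((runsOf x).getD i []).length

/-- The letter populating the `i`-th run (0-indexed). -/
def runLetter [DecidableEq α] [Inhabited α] (x : List α) (i : ℕ) : α :=
  ((runsOf x).getD i []).headI

/-- The concatenation of the first `k` runs of `x`. -/
def firstRuns [DecidableEq α] (k : ℕ) (x : List α) : List α := ((runsOf x).take k).flatten

/-- The prefix of `y` consisting of its first `ry` runs, up through the `oy`-th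
letter of the `ry`-th run (runs are 1-indexed here). -/
def runPrefix [DecidableEq α] (ry oy : ℕ) (y : List α) : List α :=
  firstRuns (ry - 1) y ++ ((runsOf y).getD (ry - 1) []).take oy

/-- The subproblem `SP(x, y, rx, ry, oy)`: the minimum cost of a correspondence
between the first `rx` runs of `x` and the prefix of `y` ending at the `oy`-th
letter of its `ry`-th run, under the constraint that the final (`ry`-th) run of
the `y`-prefix is not extended; `⊤` if no such correspondence exists. -/
noncomputable def SP [DecidableEq α] (d : α → α → ℝ) (x y : List α) (rx ry oy : ℕ) : EReal :=
  sInf ((fun p : List α × List α => ((corrCost d p.1 p.2 : ℝ) : EReal)) ''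
    {p | IsCorrespondence (firstRuns rx x) (runPrefix ry oy y) p.1 p.2 ∧
         (0 < oy → lastRunLen p.2 = oy)})

/-- Generalized edit distance over a metric with null character `nul`:
insertion/deletion of `l` costs `d nul l`, substitution of `l` by `l'` costs `d l l'`. -/
noncomputable def ged (d : α → α → ℝ) (nul : α) : List α → List α → ℝ
  | [], [] => 0
  | [], b :: ys => d nul b + ged d nul [] ys
  | a :: xs, [] => d nul a + ged d nul xs []
  | a :: xs, b :: ys =>
      min (d a b + ged d nul xs ys)
        (min (d nul a + ged d nul xs (b :: ys)) (d nul b + ged d nul (a :: xs) ys))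
  termination_by x y => x.length + y.length

/-- Simple (Hamming/Levenshtein) edit distance: unit-cost insertions, deletions
and substitutions. -/
def edH [DecidableEq α] : List α → List α → ℕ
  | [], ys => ys.length
  | xs, [] => xs.length
  | a :: xs, b :: ys =>
      min ((if a = b then 0 else 1) + edH xs ys)
        (min (1 + edH xs (b :: ys)) (1 + edH (a :: xs) ys))
  termination_by x y => x.length + y.length

/-- Simple edit distance with only unit-cost insertions and deletions. -/
def edS [DecidableEq α] : List α → List α → ℕ
  | [], ys => ys.length
  | xs, [] => xs.length
  | a :: xs, b :: ys =>
      if a = b then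
        min (edS xs ys) (min (1 + edS xs (b :: ys)) (1 + edS (a :: xs) ys))
      else
        min (1 + edS xs (b :: ys)) (1 + edS (a :: xs) ys)
  termination_by x y => x.length + y.length

/-- The padded string `p(x) = ∅ x₁ ∅ x₂ ∅ ⋯ xₙ ∅`. -/
def pad (nul : α) (x : List α) : List α := nul :: x.flatMap fun a => [a, nul]

/-- The `r`-simplification for edit distance: remove all letters of magnitude at most `r`. -/
noncomputable def sEd [MetricSpace α] (nul : α) (r : ℝ) (x : List α) : List α :=
  x.filter fun l => decide (r < dist nul l)

/-!
Write `X` for the first `rx - 1` runs of `x` and `a^lx` for its `rx`-th run, `Y` for the first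
`ry - 1` runs of `y` and `b` for the letter of its `ry`-th run. Since `Y` does not end in `b`, the
correspondences counted by `SP` are exactly the pairs `(u ++ a^m, v ++ b^oy)` of equal length with
`u`, `v` expansions of `X`, `Y` and `m ≥ lx`. Such a pair ends in the letters `(a, b)`: if `m > lx`,
removing one copy of each leaves a correspondence counted by `SP` at `oy - 1`; if `m = lx`, removing
`a^lx` together with `lx` copies of `b` leaves one counted at `(rx - 1, oy - lx)`. Both removals are
invertible and lower the cost by `d` and `d * lx` respectively, so the set of costs is the union of
two translates and its infimum is the minimum of the two.
-/

open List

theorem EReal.sInf_image_add_coe (S : Set EReal) (r : ℝ) :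
    sInf ((· + (r : EReal)) '' S) = sInf S + r := by
  refine (Monotone.map_sInf_of_continuousAt ?_ (fun _ _ h => add_le_add_left h _) (by simp)).symm
  exact ContinuousAt.comp (f := fun t : EReal => (t, (r : EReal)))
    (EReal.continuousAt_add (Or.inr (by simp)) (Or.inr (by simp)))
    (continuous_id.prodMk continuous_const).continuousAt

theorem IsExpansion.refl (x : List α) : IsExpansion x x := by
  refine ⟨replicate x.length 1, length_replicate, by simp, ?_⟩
  induction x with
  | nil => rfl
  | cons a x ih => simp [replicate_succ, ← ih]

theorem isExpansion_nil_iff {w : List α} : IsExpansion [] w ↔ w = [] :=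
  ⟨fun ⟨_, _, _, hw⟩ => hw, fun hw => hw ▸ IsExpansion.refl []⟩

theorem isExpansion_singleton_iff {c : α} {w : List α} :
    IsExpansion [c] w ↔ ∃ m, 0 < m ∧ w = replicate m c := by
  constructor
  · rintro ⟨ks, hlen, hpos, rfl⟩
    obtain ⟨k, rfl⟩ := length_eq_one_iff.mp hlen
    exact ⟨k, hpos k (mem_singleton_self k), by simp⟩
  · rintro ⟨m, hm, rfl⟩
    exact ⟨[m], rfl, fun k hk => mem_singleton.mp hk ▸ hm, by simp⟩

theorem isExpansion_append_iff {u v w : List α} :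
    IsExpansion (u ++ v) w ↔ ∃ w₁ w₂, w = w₁ ++ w₂ ∧ IsExpansion u w₁ ∧ IsExpansion v w₂ := by
  constructor
  · rintro ⟨ks, hlen, hpos, rfl⟩
    rw [length_append] at hlen
    have hzip : (u ++ v).zip ks = u.zip (ks.take u.length) ++ v.zip (ks.drop u.length) := by
      conv_lhs => rw [← take_append_drop u.length ks]
      exact zip_append (by simp; omega)
    refine ⟨_, _, by rw [hzip, flatMap_append], ⟨ks.take u.length, by simp; omega,
      fun k hk => hpos k (mem_of_mem_take hk), rfl⟩, ⟨ks.drop u.length, by simp; omega,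
      fun k hk => hpos k (mem_of_mem_drop hk), rfl⟩⟩
  · rintro ⟨w₁, w₂, rfl, ⟨ks₁, h₁, p₁, rfl⟩, ⟨ks₂, h₂, p₂, rfl⟩⟩
    exact ⟨ks₁ ++ ks₂, by simp [h₁, h₂], fun k hk => (mem_append.mp hk).elim (p₁ k) (p₂ k),
      by rw [zip_append h₁.symm, flatMap_append]⟩

theorem isExpansion_replicate_iff {c : α} {n : ℕ} (hn : 0 < n) {w : List α} :
    IsExpansion (replicate n c) w ↔ ∃ m, n ≤ m ∧ w = replicate m c := by
  induction n, hn using Nat.le_induction generalizing w with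
  | base => exact isExpansion_singleton_iff
  | succ n hn ih =>
    rw [replicate_succ', isExpansion_append_iff]
    constructor
    · rintro ⟨w₁, w₂, rfl, h₁, h₂⟩
      obtain ⟨m, hm, rfl⟩ := ih.mp h₁
      obtain ⟨k, hk, rfl⟩ := isExpansion_singleton_iff.mp h₂
      exact ⟨m + k, by omega, (replicate_add m k c).symm⟩
    · rintro ⟨m, hm, rfl⟩
      refine ⟨replicate (m - 1) c, replicate 1 c, ?_, ih.mpr ⟨m - 1, by omega, rfl⟩,
        isExpansion_singleton_iff.mpr ⟨1, one_pos, rfl⟩⟩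
      rw [← replicate_add, Nat.sub_add_cancel (by omega)]

theorem isExpansion_append_replicate_iff {u w : List α} {c : α} {n : ℕ} (hn : 0 < n) :
    IsExpansion (u ++ replicate n c) w ↔
      ∃ v m, n ≤ m ∧ IsExpansion u v ∧ w = v ++ replicate m c := by
  rw [isExpansion_append_iff]
  constructor
  · rintro ⟨v, w₂, rfl, hv, h₂⟩
    obtain ⟨m, hm, rfl⟩ := (isExpansion_replicate_iff hn).mp h₂
    exact ⟨v, m, hm, hv, rfl⟩
  · rintro ⟨v, m, hm, hv, rfl⟩
    exact ⟨v, _, rfl, hv, (isExpansion_replicate_iff hn).mpr ⟨m, hm, rfl⟩⟩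

theorem IsExpansion.getLast?_eq {u w : List α} (h : IsExpansion u w) :
    w.getLast? = u.getLast? := by
  rcases eq_nil_or_concat' u with rfl | ⟨u', c, rfl⟩
  · rw [isExpansion_nil_iff.mp h]
  · obtain ⟨w₁, w₂, rfl, -, h₂⟩ := isExpansion_append_iff.mp h
    obtain ⟨m, hm, rfl⟩ := isExpansion_singleton_iff.mp h₂
    simp [getLast?_append, getLast?_replicate, hm.ne']

theorem corrCost_append (d : α → α → ℝ) {x₁ y₁ : List α} (h : x₁.length = y₁.length)
    (x₂ y₂ : List α) :
    corrCost d (x₁ ++ x₂) (y₁ ++ y₂) = corrCost d x₁ y₁ + corrCost d x₂ y₂ := by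
  rw [corrCost, zip_append h, map_append, sum_append, corrCost, corrCost]

theorem corrCost_replicate (d : α → α → ℝ) (a b : α) (n : ℕ) :
    corrCost d (replicate n a) (replicate n b) = d a b * n := by
  simp [corrCost, mul_comm]

section Runs

variable [DecidableEq α]

theorem getD_runsOf_eq_replicate [Inhabited α] (x : List α) (k : ℕ) :
    (runsOf x).getD k [] = replicate (runLen x k) (runLetter x k) := by
  rw [runLen, runLetter]
  rcases lt_or_ge k (runsOf x).length with hk | hk
  · rw [getD_eq_getElem _ _ hk]
    have hmem := getElem_mem hk
    obtain ⟨c, _, hct⟩ := exists_cons_of_ne_nil (ne_nil_of_mem_splitBy hmem)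
    have hchain : IsChain (· = ·) (runsOf x)[k] :=
      (isChain_of_mem_splitBy hmem).imp fun _ _ h => by simpa using h
    rw [hct] at hchain ⊢
    exact isChain_eq_iff_eq_replicate.mp hchain c rfl
  · simp [getElem?_eq_none hk]

theorem runLen_pos {x : List α} {k : ℕ} (hk : k < numRuns x) : 0 < runLen x k := by
  rw [runLen, getD_eq_getElem _ _ hk]
  exact length_pos_iff.mpr (ne_nil_of_mem_splitBy (getElem_mem hk))

theorem firstRuns_succ [Inhabited α] {x : List α} {k : ℕ} (hk : k < numRuns x) :
    firstRuns (k + 1) x = firstRuns k x ++ replicate (runLen x k) (runLetter x k) := by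
  rw [firstRuns, take_add_one, getElem?_eq_getElem hk, ← getD_eq_getElem _ [] hk,
    getD_runsOf_eq_replicate]
  simp [firstRuns]

theorem runPrefix_eq [Inhabited α] {y : List α} {ry o : ℕ} (ho : o ≤ runLen y (ry - 1)) :
    runPrefix ry o y = firstRuns (ry - 1) y ++ replicate o (runLetter y (ry - 1)) := by
  rw [runPrefix, getD_runsOf_eq_replicate, take_replicate, min_eq_left ho]

theorem runLetter_ne_succ [Inhabited α] {x : List α} {k : ℕ} (hk : k + 1 < numRuns x) :
    runLetter x k ≠ runLetter x (k + 1) := by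
  have letter_of_mem {i : ℕ} (hi : i < numRuns x) {e : α} (he : e ∈ (runsOf x)[i]) :
      e = runLetter x i :=
    eq_of_mem_replicate (by rwa [← getD_runsOf_eq_replicate, getD_eq_getElem _ _ hi])
  obtain ⟨hne, hne', h⟩ := isChain_iff_getElem.mp (isChain_getLast_head_splitBy _ x) k hk
  rw [letter_of_mem (by omega) (getLast_mem hne), letter_of_mem hk (head_mem hne')] at h
  simpa using h

theorem getLast?_firstRuns_ne [Inhabited α] {x : List α} {k : ℕ} (hk : k < numRuns x) :
    (firstRuns k x).getLast? ≠ some (runLetter x k) := by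
  cases k with
  | zero => simp [firstRuns]
  | succ k =>
    rw [firstRuns_succ (by omega), getLast?_append, getLast?_replicate,
      if_neg (runLen_pos (by omega)).ne']
    simpa using runLetter_ne_succ hk

theorem lastRunLen_append_replicate {w : List α} {c : α} {n : ℕ} (hw : w.getLast? ≠ some c)
    (hn : 0 < n) : lastRunLen (w ++ replicate n c) = n := by
  have hruns : runsOf (w ++ replicate n c) = runsOf w ++ [replicate n c] := by
    rw [runsOf, splitBy_append, splitBy_of_isChain (by simpa using hn.ne')
      (isChain_replicate_of_rel n (by simp))]
    · rfl
    · intro e he e' he'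
      rw [head?_replicate, if_neg hn.ne', Option.mem_some_iff] at he'
      subst he'
      simpa using fun h : e = c => hw (h ▸ he)
  simp [lastRunLen, hruns]

end Runs

def appendBlock (k : ℕ) (a b : α) (p : List α × List α) : List α × List α :=
  (p.1 ++ replicate k a, p.2 ++ replicate k b)

theorem sInf_corrCost_image_appendBlock (d : α → α → ℝ) (k : ℕ) (a b : α)
    {A : Set (List α × List α)} (hA : ∀ p ∈ A, p.1.length = p.2.length) :
    sInf ((fun p => ((corrCost d p.1 p.2 : ℝ) : EReal)) '' (appendBlock k a b '' A)) =
      sInf ((fun p => ((corrCost d p.1 p.2 : ℝ) : EReal)) '' A) + ((d a b * k : ℝ) : EReal) := by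
  rw [← EReal.sInf_image_add_coe, Set.image_image, Set.image_image]
  refine congrArg sInf (Set.image_congr fun p hp => ?_)
  simp only [appendBlock, corrCost_append d (hA p hp), corrCost_replicate, EReal.coe_add]

section TailCorrespondences

variable [DecidableEq α]

def tailCorrs (X Y : List α) (b : α) (o : ℕ) : Set (List α × List α) :=
  {p | IsCorrespondence X (Y ++ replicate o b) p.1 p.2 ∧ (0 < o → lastRunLen p.2 = o)}

theorem length_eq_of_mem_tailCorrs {X Y : List α} {b : α} {o : ℕ} {p : List α × List α}
    (hp : p ∈ tailCorrs X Y b o) : p.1.length = p.2.length :=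
  hp.1.2.2

theorem SP_eq_sInf_tailCorrs [Inhabited α] (d : α → α → ℝ) (x y : List α) (rx ry o : ℕ)
    (ho : o ≤ runLen y (ry - 1)) :
    SP d x y rx ry o = sInf ((fun p => ((corrCost d p.1 p.2 : ℝ) : EReal)) ''
      tailCorrs (firstRuns rx x) (firstRuns (ry - 1) y) (runLetter y (ry - 1)) o) := by
  rw [SP, tailCorrs, runPrefix_eq ho]

theorem mem_tailCorrs_iff {X Y : List α} {b : α} {o : ℕ} (hY : Y.getLast? ≠ some b)
    {p : List α × List α} :
    p ∈ tailCorrs X Y b o ↔ IsExpansion X p.1 ∧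
      ∃ v, IsExpansion Y v ∧ p.2 = v ++ replicate o b ∧ p.1.length = v.length + o := by
  have hlast {v : List α} (hv : IsExpansion Y v) : v.getLast? ≠ some b := by
    rwa [hv.getLast?_eq]
  obtain ⟨xb, yb⟩ := p
  constructor
  · rintro ⟨⟨hx, hy, hlen⟩, hrigid⟩
    obtain ⟨v, w, rfl, hv, hw⟩ := isExpansion_append_iff.mp hy
    obtain rfl : w = replicate o b := by
      rcases Nat.eq_zero_or_pos o with rfl | ho
      · exact isExpansion_nil_iff.mp hw
      · obtain ⟨m, hm, rfl⟩ := (isExpansion_replicate_iff ho).mp hw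
        have := hrigid ho
        rw [lastRunLen_append_replicate (hlast hv) (by omega)] at this
        rw [this]
    exact ⟨hx, v, hv, rfl, by simpa using hlen⟩
  · rintro ⟨hx, v, hv, rfl, hlen⟩
    exact ⟨⟨hx, isExpansion_append_iff.mpr ⟨v, _, rfl, hv, .refl _⟩, by simpa using hlen⟩,
      lastRunLen_append_replicate (hlast hv)⟩

theorem tailCorrs_append_replicate {X Y : List α} {a b : α} {n o : ℕ}
    (hY : Y.getLast? ≠ some b) (hn : 0 < n) (hno : n ≤ o) :
    tailCorrs (X ++ replicate n a) Y b o =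
      appendBlock 1 a b '' tailCorrs (X ++ replicate n a) Y b (o - 1) ∪
        appendBlock n a b '' tailCorrs X Y b (o - n) := by
  ext ⟨xb, yb⟩
  simp only [Set.mem_union, Set.mem_image, mem_tailCorrs_iff hY,
    isExpansion_append_replicate_iff hn, Prod.exists, appendBlock, Prod.mk.injEq]
  constructor
  · rintro ⟨⟨u, m, hm, hu, rfl⟩, v, hv, rfl, hlen⟩
    simp only [length_append, length_replicate] at hlen
    rcases hm.eq_or_lt with rfl | hlt
    · refine Or.inr ⟨u, v ++ replicate (o - n) b, ⟨hu, v, hv, rfl, by omega⟩, rfl, ?_⟩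
      rw [append_assoc, ← replicate_add, Nat.sub_add_cancel hno]
    · refine Or.inl ⟨u ++ replicate (m - 1) a, v ++ replicate (o - 1) b,
        ⟨⟨u, m - 1, by omega, hu, rfl⟩, v, hv, rfl, by simp; omega⟩, ?_, ?_⟩
      · rw [append_assoc, ← replicate_add, Nat.sub_add_cancel (by omega)]
      · rw [append_assoc, ← replicate_add, Nat.sub_add_cancel (by omega)]
  · rintro (⟨_, _, ⟨⟨u, m, hm, hu, rfl⟩, v, hv, rfl, hlen⟩, rfl, rfl⟩ |
      ⟨u, _, ⟨hu, v, hv, rfl, hlen⟩, rfl, rfl⟩)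
    · simp only [length_append, length_replicate] at hlen
      refine ⟨⟨u, m + 1, by omega, hu, by rw [append_assoc, ← replicate_add]⟩, v, hv, ?_,
        by simp; omega⟩
      rw [append_assoc, ← replicate_add, Nat.sub_add_cancel (by omega)]
    · refine ⟨⟨u, n, le_rfl, hu, rfl⟩, v, hv, ?_, by simp; omega⟩
      rw [append_assoc, ← replicate_add, Nat.sub_add_cancel hno]

end TailCorrespondences

theorem stmt15_general [MetricSpace α] [DecidableEq α] [Inhabited α] (x y : List α)
    (rx ry oy : ℕ) (hrx : 1 ≤ rx) (hrx' : rx ≤ numRuns x)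
    (hry : 1 ≤ ry) (hry' : ry ≤ numRuns y)
    (hoy' : oy ≤ runLen y (ry - 1))
    (hcase : runLen x (rx - 1) ≤ oy) :
    SP dist x y rx ry oy =
      min (SP dist x y rx ry (oy - 1) +
            ((dist (runLetter x (rx - 1)) (runLetter y (ry - 1)) : ℝ) : EReal))
          (SP dist x y (rx - 1) ry (oy - runLen x (rx - 1)) +
            ((dist (runLetter x (rx - 1)) (runLetter y (ry - 1)) *
              (runLen x (rx - 1) : ℝ) : ℝ) : EReal)) := by
  have hlx : 0 < runLen x (rx - 1) := runLen_pos (by omega)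
  have hX : firstRuns rx x =
      firstRuns (rx - 1) x ++ replicate (runLen x (rx - 1)) (runLetter x (rx - 1)) := by
    rw [← firstRuns_succ (by omega), Nat.sub_add_cancel hrx]
  have hY := getLast?_firstRuns_ne (x := y) (k := ry - 1) (by omega)
  rw [SP_eq_sInf_tailCorrs _ _ _ _ _ _ hoy', SP_eq_sInf_tailCorrs _ _ _ _ _ _ (by omega),
    SP_eq_sInf_tailCorrs _ _ _ _ _ _ (by omega), hX, tailCorrs_append_replicate hY hlx hcase,
    Set.image_union, sInf_union,
    sInf_corrCost_image_appendBlock _ _ _ _ fun _ => length_eq_of_mem_tailCorrs,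
    sInf_corrCost_image_appendBlock _ _ _ _ fun _ => length_eq_of_mem_tailCorrs,
    Nat.cast_one, mul_one]

/-- The recurrence for `SP(x, y, rx, ry, oy)` in the case `l_x ≤ o_y`. -/
theorem stmt15 [MetricSpace α] [DecidableEq α] [Inhabited α] (x y : List α)
    (rx ry oy : ℕ) (hrx : 1 ≤ rx) (hrx' : rx ≤ numRuns x)
    (hry : 1 ≤ ry) (hry' : ry ≤ numRuns y)
    (hoy : 1 ≤ oy) (hoy' : oy ≤ runLen y (ry - 1))
    (hcase : runLen x (rx - 1) ≤ oy) :
    SP dist x y rx ry oy =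
      min (SP dist x y rx ry (oy - 1) +
            ((dist (runLetter x (rx - 1)) (runLetter y (ry - 1)) : ℝ) : EReal))
          (SP dist x y (rx - 1) ry (oy - runLen x (rx - 1)) +
            ((dist (runLetter x (rx - 1)) (runLetter y (ry - 1)) *
              (runLen x (rx - 1) : ℝ) : ℝ) : EReal)) :=
  stmt15_general x y rx ry oy hrx hrx' hry hry' hoy' hcase
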